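/- arXiv:1105.1469 — 4 statements merged into one kernel-verified Lean document; each statement's English description precedes it below -/
import Mathlib

section
/- For the Schönhardt twisted octahedron with parameters a = 8/5 and h = 1/2, every one of the six vertices has Euclidean norm strictly greater than 1 (all vertices lie outside the closed unit ball), and every one of the twelve closed edge segments contains a point of Euclidean norm strictly less than 1 (all edges intersect the open unit ball). -/
set_option maxHeartbeats 1000000


noncomputable section

/-- Vertex `A` of Schönhardt's twisted octahedron with parameters `a`, `h`. -/
def schA (a h : ℝ) : EuclideanSpace ℝ (Fin 3) := WithLp.toLp 2 ![a / Real.sqrt 3, 0, h]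

/-- Vertex `B` of Schönhardt's twisted octahedron. -/
def schB (a h : ℝ) : EuclideanSpace ℝ (Fin 3) :=
  WithLp.toLp 2 ![-(a / Real.sqrt 3) / 2, Real.sqrt 3 / 2 * (a / Real.sqrt 3), h]

/-- Vertex `C` of Schönhardt's twisted octahedron. -/
def schC (a h : ℝ) : EuclideanSpace ℝ (Fin 3) :=
  WithLp.toLp 2 ![-(a / Real.sqrt 3) / 2, -(Real.sqrt 3 / 2 * (a / Real.sqrt 3)), h]

/-- Vertex `A⁰` of Schönhardt's twisted octahedron. -/
def schA0 (a h : ℝ) : EuclideanSpace ℝ (Fin 3) := WithLp.toLp 2 ![0, a / Real.sqrt 3, -h]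

/-- Vertex `B⁰` of Schönhardt's twisted octahedron. -/
def schB0 (a h : ℝ) : EuclideanSpace ℝ (Fin 3) :=
  WithLp.toLp 2 ![-(Real.sqrt 3 / 2 * (a / Real.sqrt 3)), -((a / Real.sqrt 3) / 2), -h]

/-- Vertex `C⁰` of Schönhardt's twisted octahedron. -/
def schC0 (a h : ℝ) : EuclideanSpace ℝ (Fin 3) :=
  WithLp.toLp 2 ![Real.sqrt 3 / 2 * (a / Real.sqrt 3), -((a / Real.sqrt 3) / 2), -h]

lemma norm3_lt_one' (x : EuclideanSpace ℝ (Fin 3)) (h : x 0^2 + x 1^2 + x 2^2 < 1) : ‖x‖ < 1 := by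
  rw [EuclideanSpace.norm_eq, show (1:ℝ) = Real.sqrt 1 by simp]
  apply Real.sqrt_lt_sqrt (by positivity)
  simpa [Fin.sum_univ_three, sq_abs] using h

lemma one_lt_norm3' (x : EuclideanSpace ℝ (Fin 3)) (h : 1 < x 0^2 + x 1^2 + x 2^2) : 1 < ‖x‖ := by
  rw [EuclideanSpace.norm_eq, Real.lt_sqrt (by norm_num)]
  simpa [Fin.sum_univ_three, sq_abs] using h

/-- For the Schönhardt twisted octahedron with parameters `a = 8/5`, `h = 1/2`,
all six vertices lie outside the closed unit ball and all twelve closed edges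
meet the open unit ball. -/
theorem schonhardt_vertices_outside_edges_inside :
    (∀ P ∈ [schA (8/5) (1/2), schB (8/5) (1/2), schC (8/5) (1/2),
            schA0 (8/5) (1/2), schB0 (8/5) (1/2), schC0 (8/5) (1/2)], 1 < ‖P‖) ∧
    (∀ e ∈ [(schA (8/5) (1/2), schB (8/5) (1/2)),
            (schB (8/5) (1/2), schC (8/5) (1/2)),
            (schC (8/5) (1/2), schA (8/5) (1/2)),
            (schA0 (8/5) (1/2), schB0 (8/5) (1/2)),
            (schB0 (8/5) (1/2), schC0 (8/5) (1/2)),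
            (schC0 (8/5) (1/2), schA0 (8/5) (1/2)),
            (schA (8/5) (1/2), schB0 (8/5) (1/2)),
            (schA (8/5) (1/2), schC0 (8/5) (1/2)),
            (schB (8/5) (1/2), schC0 (8/5) (1/2)),
            (schB (8/5) (1/2), schA0 (8/5) (1/2)),
            (schC (8/5) (1/2), schA0 (8/5) (1/2)),
            (schC (8/5) (1/2), schB0 (8/5) (1/2))],
      ∃ z ∈ segment ℝ e.1 e.2, ‖z‖ < 1) := by
  
  have hs : Real.sqrt 3 ^ 2 = 3 := Real.sq_sqrt (by norm_num)
  have hs0 : (0:ℝ) < Real.sqrt 3 := Real.sqrt_pos.2 (by norm_num)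
  have hub : Real.sqrt 3 < 1.8 := by nlinarith
  have ht2 : ((8:ℝ)/5 / Real.sqrt 3)^2 = 64/75 := by
    rw [div_pow, hs]; norm_num
  have hsne : Real.sqrt 3 ≠ 0 := ne_of_gt hs0
  have ht3 : Real.sqrt 3 * ((8:ℝ)/5 / Real.sqrt 3) = 8/5 := by
    field_simp
  constructor
  · intro P hP
    fin_cases hP <;>
    · apply one_lt_norm3'
      simp only [schA, schB, schC, schA0, schB0, schC0, Matrix.cons_val_zero,
        Matrix.cons_val_one, Matrix.head_cons, Matrix.cons_val_two, Matrix.tail_cons,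
        PiLp.toLp_apply, WithLp.ofLp_toLp]
      nlinarith [ht2, ht3, hs, hs0, hub, sq_nonneg ((8:ℝ)/5 / Real.sqrt 3)]
  · intro e he
    fin_cases he <;>
    · refine ⟨midpoint ℝ _ _, midpoint_mem_segment _ _, ?_⟩
      apply norm3_lt_one'
      simp only [midpoint_eq_smul_add, PiLp.smul_apply, PiLp.add_apply, smul_eq_mul, invOf_eq_inv,
        schA, schB, schC, schA0, schB0, schC0, Matrix.cons_val_zero,
        Matrix.cons_val_one, Matrix.head_cons, Matrix.cons_val_two, Matrix.tail_cons,
        PiLp.toLp_apply, WithLp.ofLp_toLp]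
      nlinarith [ht2, ht3, hs, hs0, hub, sq_nonneg ((8:ℝ)/5 / Real.sqrt 3)]
end
end

section
/- For all a, h > 0, the minimum of the squared Euclidean norm over each of the six closed segments AB, BC, CA, A⁰B⁰, B⁰C⁰, C⁰A⁰ of the Schönhardt twisted octahedron equals h² + a²/12 (attained at the midpoint of the segment); consequently each of these six edges intersects the open unit ball of ℝ³ if and only if h² + a²/12 < 1. -/
noncomputable section

open scoped RealInnerProductSpace

lemma norm_sq_three (x : EuclideanSpace ℝ (Fin 3)) :
    ‖x‖ ^ 2 = x 0 ^ 2 + x 1 ^ 2 + x 2 ^ 2 := by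
  rw [EuclideanSpace.norm_eq, Real.sq_sqrt (by positivity)]
  simp [Fin.sum_univ_three, Real.norm_eq_abs, sq_abs]

lemma edge_min (p q : EuclideanSpace ℝ (Fin 3)) {m : ℝ}
    (hN : ‖p‖ ^ 2 = ‖q‖ ^ 2) (hm : ‖midpoint ℝ p q‖ ^ 2 = m) :
    IsLeast ((fun z : EuclideanSpace ℝ (Fin 3) => ‖z‖ ^ 2) '' segment ℝ p q) m ∧
    ‖midpoint ℝ p q‖ ^ 2 = m ∧
    ((∃ z ∈ segment ℝ p q, ‖z‖ < 1) ↔ m < 1) := by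
  have hI2 : 2 * (inner ℝ p q : ℝ) ≤ ‖p‖ ^ 2 + ‖q‖ ^ 2 := by
    have h0 : (0:ℝ) ≤ ‖p - q‖ ^ 2 := sq_nonneg _
    rw [norm_sub_sq_real] at h0; linarith
  have hmid : (‖p‖ ^ 2 + 2 * (inner ℝ p q : ℝ) + ‖q‖ ^ 2) / 4 = m := by
    rw [← hm, midpoint_eq_smul_add, norm_smul, mul_pow, norm_add_sq_real]
    norm_num
    ring
  have hlb : ∀ z ∈ segment ℝ p q, m ≤ ‖z‖ ^ 2 := by
    rintro z ⟨u, v, hu, hv, huv, rfl⟩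
    have hz : ‖u • p + v • q‖ ^ 2
        = u ^ 2 * ‖p‖ ^ 2 + 2 * (u * v) * (inner ℝ p q : ℝ) + v ^ 2 * ‖q‖ ^ 2 := by
      rw [norm_add_sq_real, real_inner_smul_left, real_inner_smul_right,
        norm_smul, norm_smul, Real.norm_eq_abs, Real.norm_eq_abs,
        abs_of_nonneg hu, abs_of_nonneg hv]
      ring
    rw [hz]
    have hNp : ‖p‖ ^ 2 * (u + v) ^ 2 = ‖p‖ ^ 2 := by rw [huv]; ring
    have hIp : (inner ℝ p q : ℝ) * (u + v) ^ 2 = (inner ℝ p q : ℝ) := by rw [huv]; ring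
    nlinarith [mul_nonneg (sq_nonneg (u - v))
      (show (0:ℝ) ≤ ‖p‖ ^ 2 - (inner ℝ p q : ℝ) by linarith), hNp, hIp, hN, hmid]
  refine ⟨⟨⟨midpoint ℝ p q, midpoint_mem_segment p q, hm⟩, ?_⟩, hm, ?_, ?_⟩
  · rintro x ⟨z, hzs, rfl⟩; exact hlb z hzs
  · rintro ⟨z, hzs, hzlt⟩
    have := hlb z hzs
    nlinarith [norm_nonneg z]
  · intro h1
    exact ⟨midpoint ℝ p q, midpoint_mem_segment p q,
      by nlinarith [norm_nonneg (midpoint ℝ p q)]⟩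

set_option maxHeartbeats 1000000 in
/-- For all `a, h > 0`, the minimum of the squared Euclidean norm over each of
the six closed segments `AB, BC, CA, A⁰B⁰, B⁰C⁰, C⁰A⁰` equals `h² + a²/12`,
attained at the midpoint; consequently each of these edges meets the open unit
ball iff `h² + a²/12 < 1`. -/
theorem schonhardt_triangle_edge_min_norm (a h : ℝ) (ha : 0 < a) (hh : 0 < h) :
    ∀ e ∈ [(schA a h, schB a h), (schB a h, schC a h), (schC a h, schA a h),
           (schA0 a h, schB0 a h), (schB0 a h, schC0 a h), (schC0 a h, schA0 a h)],
      IsLeast ((fun z : EuclideanSpace ℝ (Fin 3) => ‖z‖ ^ 2) '' segment ℝ e.1 e.2)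
          (h ^ 2 + a ^ 2 / 12) ∧
      ‖midpoint ℝ e.1 e.2‖ ^ 2 = h ^ 2 + a ^ 2 / 12 ∧
      ((∃ z ∈ segment ℝ e.1 e.2, ‖z‖ < 1) ↔ h ^ 2 + a ^ 2 / 12 < 1) := by
  have hs : Real.sqrt 3 ^ 2 = 3 := Real.sq_sqrt (by norm_num)
  have hs0 : (0:ℝ) < Real.sqrt 3 := Real.sqrt_pos.2 (by norm_num)
  have hs4 : Real.sqrt 3 ^ 4 = 9 := by nlinarith [hs]
  have hs6 : Real.sqrt 3 ^ 6 = 27 := by nlinarith [hs]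
  intro e he
  simp only [List.mem_cons, List.not_mem_nil, or_false] at he
  rcases he with rfl | rfl | rfl | rfl | rfl | rfl <;>
  · refine edge_min _ _ ?_ ?_
    · rw [norm_sq_three, norm_sq_three]
      simp only [schA, schB, schC, schA0, schB0, schC0, Matrix.cons_val_zero,
        Matrix.cons_val_one, Matrix.cons_val_two, Matrix.head_cons, Matrix.tail_cons]
      field_simp
      try ring_nf
      try (simp only [hs, hs4, hs6]; ring)
    · rw [norm_sq_three]
      simp only [midpoint_eq_smul_add, PiLp.smul_apply, PiLp.add_apply,
        schA, schB, schC, schA0, schB0, schC0, Matrix.cons_val_zero,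
        Matrix.cons_val_one, Matrix.cons_val_two, Matrix.head_cons, Matrix.tail_cons, smul_eq_mul,
          invOf_eq_inv]
      field_simp
      try ring_nf
      try (simp only [hs, hs4, hs6]; ring)
end
end

section
/- For all a, h > 0 and all t ∈ ℝ, the labelled configurations Q_t and Q_{−t} have equal corresponding edge lengths: ‖A − (B⁰ + tη_{B⁰})‖ = ‖A − (B⁰ − tη_{B⁰})‖, ‖A − (C⁰ + tη_{C⁰})‖ = ‖A − (C⁰ − tη_{C⁰})‖, ‖B − (A⁰ + tη_{A⁰})‖ = ‖B − (A⁰ − tη_{A⁰})‖, ‖B − (C⁰ + tη_{C⁰})‖ = ‖B − (C⁰ − tη_{C⁰})‖, ‖C − (A⁰ + tη_{A⁰})‖ = ‖C − (A⁰ − tη_{A⁰})‖, ‖C − (B⁰ + tη_{B⁰})‖ = ‖C − (B⁰ − tη_{B⁰})‖, and ‖(A⁰ + tη_{A⁰}) − (B⁰ + tη_{B⁰})‖ = ‖(A⁰ − tη_{A⁰}) − (B⁰ − tη_{B⁰})‖, ‖(B⁰ + tη_{B⁰}) − (C⁰ + tη_{C⁰})‖ = ‖(B⁰ − tη_{B⁰})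 − (C⁰ − tη_{C⁰})‖, ‖(C⁰ + tη_{C⁰}) − (A⁰ + tη_{A⁰})‖ = ‖(C⁰ − tη_{C⁰}) − (A⁰ − tη_{A⁰})‖ (the edges AB, BC, CA among the fixed vertices are unchanged). -/
noncomputable section

/-- Infinitesimal flexion vector at `A⁰` (normal to the face `A⁰BC` up to
positive scale). -/
def etaA0 (a h : ℝ) : EuclideanSpace ℝ (Fin 3) := WithLp.toLp 2 ![4 * h, 0, a / Real.sqrt 3]

/-- Infinitesimal flexion vector at `B⁰` (normal to the face `B⁰CA` up to
positive scale). -/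
def etaB0 (a h : ℝ) : EuclideanSpace ℝ (Fin 3) :=
  WithLp.toLp 2 ![-(2 * h), 2 * Real.sqrt 3 * h, a / Real.sqrt 3]

/-- Infinitesimal flexion vector at `C⁰` (normal to the face `C⁰AB` up to
positive scale). -/
def etaC0 (a h : ℝ) : EuclideanSpace ℝ (Fin 3) :=
  WithLp.toLp 2 ![-(2 * h), -(2 * Real.sqrt 3 * h), a / Real.sqrt 3]

set_option maxHeartbeats 1000000 in
/-- For all `a, h > 0` and all `t ∈ ℝ`, the labelled configurations `Q_t` and
`Q_{−t}` have equal corresponding edge lengths. -/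
theorem schonhardt_flexed_configs_same_edge_lengths
    (a h : ℝ) (ha : 0 < a) (hh : 0 < h) (t : ℝ) :
    ‖schA a h - (schB0 a h + t • etaB0 a h)‖ = ‖schA a h - (schB0 a h - t • etaB0 a h)‖ ∧
    ‖schA a h - (schC0 a h + t • etaC0 a h)‖ = ‖schA a h - (schC0 a h - t • etaC0 a h)‖ ∧
    ‖schB a h - (schA0 a h + t • etaA0 a h)‖ = ‖schB a h - (schA0 a h - t • etaA0 a h)‖ ∧
    ‖schB a h - (schC0 a h + t • etaC0 a h)‖ = ‖schB a h - (schC0 a h - t • etaC0 a h)‖ ∧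
    ‖schC a h - (schA0 a h + t • etaA0 a h)‖ = ‖schC a h - (schA0 a h - t • etaA0 a h)‖ ∧
    ‖schC a h - (schB0 a h + t • etaB0 a h)‖ = ‖schC a h - (schB0 a h - t • etaB0 a h)‖ ∧
    ‖(schA0 a h + t • etaA0 a h) - (schB0 a h + t • etaB0 a h)‖
      = ‖(schA0 a h - t • etaA0 a h) - (schB0 a h - t • etaB0 a h)‖ ∧
    ‖(schB0 a h + t • etaB0 a h) - (schC0 a h + t • etaC0 a h)‖
      = ‖(schB0 a h - t • etaB0 a h) - (schC0 a h - t • etaC0 a h)‖ ∧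
    ‖(schC0 a h + t • etaC0 a h) - (schA0 a h + t • etaA0 a h)‖
      = ‖(schC0 a h - t • etaC0 a h) - (schA0 a h - t • etaA0 a h)‖ := by
  have h3 : Real.sqrt 3 ^ 2 = 3 := Real.sq_sqrt (by norm_num)
  have step : ∀ (lc : ℝ), ∀ u v : EuclideanSpace ℝ (Fin 3),
      ((u 0 ^ 2 + u 1 ^ 2 + u 2 ^ 2) - (v 0 ^ 2 + v 1 ^ 2 + v 2 ^ 2) = lc * (Real.sqrt 3 ^ 2 - 3)) →
      ‖u‖ = ‖v‖ := by
    intro lc u v huv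
    rw [EuclideanSpace.norm_eq, EuclideanSpace.norm_eq]
    congr 1
    simp only [Real.norm_eq_abs, sq_abs, Fin.sum_univ_three]
    rw [h3] at huv
    linarith
  refine ⟨step 0 _ _ ?_, step 0 _ _ ?_, step 0 _ _ ?_,
    step (4 * a * (Real.sqrt 3)⁻¹ * t * h) _ _ ?_, step 0 _ _ ?_,
    step (4 * a * (Real.sqrt 3)⁻¹ * t * h) _ _ ?_, step 0 _ _ ?_, step 0 _ _ ?_,
    step 0 _ _ ?_⟩ <;>
  · simp only [schA, schB, schC, schA0, schB0, schC0, etaA0, etaB0, etaC0,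
      PiLp.add_apply, PiLp.sub_apply, PiLp.smul_apply, PiLp.toLp_apply,
      Pi.add_apply, Pi.sub_apply, Pi.smul_apply, smul_eq_mul,
      Matrix.cons_val_zero, Matrix.cons_val_one, Matrix.head_cons, Matrix.cons_val_two,
      Matrix.tail_cons]
    ring
end
end

section
/- For all a, h > 0 and all t ≠ 0, the configurations Q_t and Q_{−t} are not congruent as labelled configurations: there is no isometry F of Euclidean ℝ³ with F(A) = A, F(B) = B, F(C) = C, F(A⁰ + tη_{A⁰}) = A⁰ − tη_{A⁰}, F(B⁰ + tη_{B⁰}) = B⁰ − tη_{B⁰}, and F(C⁰ + tη_{C⁰}) = C⁰ − tη_{C⁰}. -/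
noncomputable section

/-- For all `a, h > 0` and `t ≠ 0`, the labelled configurations `Q_t` and
`Q_{−t}` are not congruent: no isometry of Euclidean `ℝ³` matches the six
labelled vertices. -/
theorem schonhardt_flexed_configs_not_congruent
    (a h : ℝ) (ha : 0 < a) (hh : 0 < h) (t : ℝ) (ht : t ≠ 0) :
    ¬ ∃ F : EuclideanSpace ℝ (Fin 3) ≃ᵢ EuclideanSpace ℝ (Fin 3),
        F (schA a h) = schA a h ∧
        F (schB a h) = schB a h ∧
        F (schC a h) = schC a h ∧
        F (schA0 a h + t • etaA0 a h) = schA0 a h - t • etaA0 a h ∧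
        F (schB0 a h + t • etaB0 a h) = schB0 a h - t • etaB0 a h ∧
        F (schC0 a h + t • etaC0 a h) = schC0 a h - t • etaC0 a h := by
  rintro ⟨F, hA, -, -, hA0, -, -⟩
  have hd : dist (schA a h) (schA0 a h + t • etaA0 a h)
      = dist (schA a h) (schA0 a h - t • etaA0 a h) := by
    have := F.dist_eq (schA a h) (schA0 a h + t • etaA0 a h)
    rw [hA, hA0] at this
    exact this.symm
  have hr : (0:ℝ) < a / Real.sqrt 3 := by positivity
  have hsq : dist (schA a h) (schA0 a h + t • etaA0 a h) ^ 2
      = dist (schA a h) (schA0 a h - t • etaA0 a h) ^ 2 := by rw [hd]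
  rw [EuclideanSpace.dist_eq, EuclideanSpace.dist_eq,
    Real.sq_sqrt (by positivity), Real.sq_sqrt (by positivity)] at hsq
  simp only [Fin.sum_univ_three, schA, schA0, etaA0, PiLp.add_apply, PiLp.sub_apply,
    PiLp.smul_apply, smul_eq_mul, Matrix.cons_val_zero, Matrix.cons_val_one,
    Matrix.head_cons, Matrix.cons_val_two, Matrix.tail_cons, Real.dist_eq, WithLp.ofLp_toLp] at hsq
  simp only [sq_abs] at hsq
  have : t * (h * (a / Real.sqrt 3)) = 0 := by nlinarith [hsq]
  have := mul_pos hh hr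
  rcases mul_eq_zero.1 ‹t * (h * (a / Real.sqrt 3)) = 0› with h1 | h1
  · exact ht h1
  · linarith
end
end
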